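/- arXiv:1012.3197 — 2 statements merged into one kernel-verified Lean document; each statement's English description precedes it below -/
import Mathlib

section
/- Let H be a separable Hilbert space and π : B(H) → B(Û) a normal unital *-homomorphism into the bounded operators on a (not necessarily separable) Hilbert space Û. If there exists a separable subset S ⊂ Û such that the linear span of {π(A)v : A ∈ B(H), v ∈ S} is dense in Û, then Û is separable. -/
open scoped ComplexOrder InnerProductSpace
open Filter Topology ContinuousLinearMap

set_option synthInstance.maxHeartbeats 1000000
set_option maxHeartbeats 1000000

noncomputable section

namespace QSM

noncomputable instance piLpComplete (ι : Type*) (E : Type*) [NormedAddCommGroup E]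
    [CompleteSpace E] : CompleteSpace (PiLp 2 fun _ : ι => E) :=
  (PiLp.uniformEquiv 2 fun _ : ι => E).completeSpace_iff.2 inferInstance

variable {H K : Type*}
  [NormedAddCommGroup H] [InnerProductSpace ℂ H] [CompleteSpace H]
  [NormedAddCommGroup K] [InnerProductSpace ℂ K] [CompleteSpace K]

/-- Sequential/net convergence in the weak operator topology. -/
def WOTto {E F : Type*} [NormedAddCommGroup E] [InnerProductSpace ℂ E]
    [NormedAddCommGroup F] [InnerProductSpace ℂ F]
    {ι : Type*} [Preorder ι] (T : ι → (E →L[ℂ] F)) (T' : E →L[ℂ] F) : Prop :=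
  ∀ x y, Tendsto (fun n => ⟪x, T n y⟫_ℂ) atTop (𝓝 ⟪x, T' y⟫_ℂ)

section MatOp

variable {ι : Type*} [Fintype ι] [DecidableEq ι]
variable {E F : Type*} [NormedAddCommGroup E] [InnerProductSpace ℂ E]
  [NormedAddCommGroup F] [InnerProductSpace ℂ F]

/-- The `j`-th coordinate projection on the Hilbert space direct sum. -/
def projCLM (E : Type*) [NormedAddCommGroup E] [InnerProductSpace ℂ E] (j : ι) :
    (PiLp 2 fun _ : ι => E) →L[ℂ] E :=
  (ContinuousLinearMap.proj j).comp (PiLp.continuousLinearEquiv 2 ℂ _).toContinuousLinearMap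

/-- The `i`-th coordinate inclusion into the Hilbert space direct sum. -/
def inclCLM (E : Type*) [NormedAddCommGroup E] [InnerProductSpace ℂ E] (i : ι) :
    E →L[ℂ] (PiLp 2 fun _ : ι => E) :=
  ((PiLp.continuousLinearEquiv 2 ℂ _).symm.toContinuousLinearMap).comp
    (ContinuousLinearMap.pi fun j => if j = i then ContinuousLinearMap.id ℂ E else 0)

/-- The operator on the `n`-fold Hilbert space direct sum determined by a matrix of operators.
This realizes the identification `Mₙ(B(E)) = B(Eⁿ)` used for amplifications. -/
def matOp (T : ι → ι → (E →L[ℂ] F)) : (PiLp 2 fun _ : ι => E) →L[ℂ] (PiLp 2 fun _ : ι => F) :=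
  ∑ i, ∑ j, (inclCLM F i).comp ((T i j).comp (projCLM E j))

end MatOp

variable (S : StarSubalgebra ℂ (H →L[ℂ] H))

/-- A linear map `Φ : S → B(K)` is completely positive if all of its amplifications
map positive matrices over `S` to positive operators. -/
def IsCPMap (Φ : S →ₗ[ℂ] (K →L[ℂ] K)) : Prop :=
  ∀ (n : ℕ) (a : Matrix (Fin n) (Fin n) S),
    (matOp fun i j => (a i j : H →L[ℂ] H)).IsPositive →
    (matOp fun i j => Φ (a i j)).IsPositive

/-- A linear map `Φ : S → B(K)` is completely bounded with complete bound `C` if all of its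
amplifications have norm at most `C` times the norm of the input matrix. -/
def IsCBMap (Φ : S →ₗ[ℂ] (K →L[ℂ] K)) (C : ℝ) : Prop :=
  ∀ (n : ℕ) (a : Matrix (Fin n) (Fin n) S),
    ‖matOp fun i j => Φ (a i j)‖ ≤ C * ‖matOp fun i j => (a i j : H →L[ℂ] H)‖

/-- Weak*-continuity (equivalently, for positive maps, normality) of a map `Φ : S → B(K)`:
`Φ` maps bounded weak-operator convergent sequences to weak-operator convergent sequences.
(On bounded sets of `B(H)`, `H` separable, the weak* topology coincides with the weak operator
topology and is metrizable, so sequences suffice.) -/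
def WStarCont (Φ : S →ₗ[ℂ] (K →L[ℂ] K)) : Prop :=
  ∀ (A : ℕ → S) (A' : S) (c : ℝ),
    (∀ n, ‖(A n : H →L[ℂ] H)‖ ≤ c) →
    WOTto (fun n => (A n : H →L[ℂ] H)) (A' : H →L[ℂ] H) →
    WOTto (fun n => Φ (A n)) (Φ A')

/-- A normal completely positive map. -/
def NormalCP (Φ : S →ₗ[ℂ] (K →L[ℂ] K)) : Prop :=
  IsCPMap S Φ ∧ WStarCont S Φ

/-- The cone ordering on maps: `Φ ⪯ Ψ` iff `Ψ - Φ` is a normal CP map. -/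
def CPle (Φ Ψ : S →ₗ[ℂ] (K →L[ℂ] K)) : Prop := NormalCP S (Ψ - Φ)

/-- A quantum channel into the von Neumann algebra `N`: a unital normal CP map with range in
`N`. -/
def IsChannel (N : VonNeumannAlgebra K) (Φ : S →ₗ[ℂ] (K →L[ℂ] K)) : Prop :=
  NormalCP S Φ ∧ (∀ X, Φ X ∈ N) ∧ Φ 1 = 1

/-- The elementary map `E ⊙ F : S → B(K)`, `A ↦ E A F`, for `E ∈ B(H,K)`, `F ∈ B(K,H)`. -/
def sandwichMap (L : H →L[ℂ] K) (R : K →L[ℂ] H) : S →ₗ[ℂ] (K →L[ℂ] K) where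
  toFun A := L ∘L ((A : H →L[ℂ] H) ∘L R)
  map_add' a b := by simp [add_comp, comp_add]
  map_smul' c a := by simp [smul_comp, comp_smulₛₗ]


/-- `B(H)` itself, regarded as a von Neumann algebra on `H`. -/
def topVN (H : Type*) [NormedAddCommGroup H] [InnerProductSpace ℂ H] [CompleteSpace H] :
    VonNeumannAlgebra H where
  toStarSubalgebra := ⊤
  centralizer_centralizer' := by
    show Set.centralizer (Set.centralizer ((⊤ : StarSubalgebra ℂ (H →L[ℂ] H)) : Set (H →L[ℂ] H)))
      = ((⊤ : StarSubalgebra ℂ (H →L[ℂ] H)) : Set (H →L[ℂ] H))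
    ext x
    simp only [Set.mem_centralizer_iff]
    constructor
    · intro _; simp
    · intro _ g hg
      exact (hg x (by simp)).symm

/-- The inclusion map `M ↪ B(H)` as a linear map. -/
def inclusionMap (M : VonNeumannAlgebra H) : M.toStarSubalgebra →ₗ[ℂ] (H →L[ℂ] H) where
  toFun A := (A : H →L[ℂ] H)
  map_add' _ _ := rfl
  map_smul' _ _ := rfl

theorem mem_topVN_sa {H : Type*} [NormedAddCommGroup H] [InnerProductSpace ℂ H]
    [CompleteSpace H] (a : H →L[ℂ] H) : a ∈ (topVN H).toStarSubalgebra := by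
  show a ∈ (⊤ : StarSubalgebra ℂ (H →L[ℂ] H))
  exact StarSubalgebra.mem_top

/-- The linear space of weak*-continuous completely bounded maps from `M` to `B(K)` with
values in `N`, realized (via the equality `CB = span CP` proved in the paper) as the linear
span of the normal completely positive maps from `M` into `N`. -/
def CBsp (M : VonNeumannAlgebra H) (N : VonNeumannAlgebra K) :
    Submodule ℂ (M.toStarSubalgebra →ₗ[ℂ] (K →L[ℂ] K)) :=
  Submodule.span ℂ {Φ | NormalCP M.toStarSubalgebra Φ ∧ ∀ X, Φ X ∈ N}

/-- `Eₙ ⇑ E` : the sequence `Eₙ` of normal CP maps is CP-increasing, CP-bounded by the normal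
CP map `E`, and converges pointwise to `E` in the weak operator topology (so that `E` is its
least upper bound). -/
def CPUp (E : ℕ → (S →ₗ[ℂ] (K →L[ℂ] K))) (E' : S →ₗ[ℂ] (K →L[ℂ] K)) : Prop :=
  (∀ n, NormalCP S (E n)) ∧ NormalCP S E' ∧
  (∀ n m, n ≤ m → CPle S (E n) (E m)) ∧ (∀ n, CPle S (E n) E') ∧
  ∀ X, WOTto (fun n => E n X) (E' X)

section Supermap

variable {H₁ K₁ H₂ K₂ : Type*}
  [NormedAddCommGroup H₁] [InnerProductSpace ℂ H₁] [CompleteSpace H₁]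
  [NormedAddCommGroup K₁] [InnerProductSpace ℂ K₁] [CompleteSpace K₁]
  [NormedAddCommGroup H₂] [InnerProductSpace ℂ H₂] [CompleteSpace H₂]
  [NormedAddCommGroup K₂] [InnerProductSpace ℂ K₂] [CompleteSpace K₂]
  {M₁ : VonNeumannAlgebra H₁} {N₁ : VonNeumannAlgebra K₁}
  {M₂ : VonNeumannAlgebra H₂} {N₂ : VonNeumannAlgebra K₂}

/-- Complete positivity of a supermap `Sm : CB(M₁,N₁) → CB(M₂,N₂)`: for every `n`, the
amplification `Iₙ ⊗ Sm` is positive.  Here a map `CB(M₁⁽ⁿ⁾,N₁⁽ⁿ⁾)` is encoded by its components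
`t k l i j ∈ CB(M₁,N₁)` under the identification `CB(M₁⁽ⁿ⁾,N₁⁽ⁿ⁾) = CB(Mₙ(ℂ),Mₙ(ℂ)) ⊗ CB(M₁,N₁)`,
and positivity of a map of matrix algebras means that it sends positive matrices (viewed as
operators on the direct sum via `matOp`) to positive matrices. -/
def SupCP (Sm : CBsp M₁ N₁ →ₗ[ℂ] CBsp M₂ N₂) : Prop :=
  ∀ (n : ℕ) (t : Fin n → Fin n → Fin n → Fin n → CBsp M₁ N₁),
    (∀ A : Matrix (Fin n) (Fin n) M₁.toStarSubalgebra,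
      (matOp fun i j => (A i j : H₁ →L[ℂ] H₁)).IsPositive →
      (matOp fun k l => ∑ i, ∑ j,
        ((t k l i j : M₁.toStarSubalgebra →ₗ[ℂ] (K₁ →L[ℂ] K₁)) (A i j))).IsPositive) →
    ∀ B : Matrix (Fin n) (Fin n) M₂.toStarSubalgebra,
      (matOp fun i j => (B i j : H₂ →L[ℂ] H₂)).IsPositive →
      (matOp fun k l => ∑ i, ∑ j,
        ((Sm (t k l i j) : M₂.toStarSubalgebra →ₗ[ℂ] (K₂ →L[ℂ] K₂)) (B i j))).IsPositive

/-- Normality of a supermap: `Sm` preserves least upper bounds of CP-increasing CP-bounded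
sequences. -/
def SupNormal (Sm : CBsp M₁ N₁ →ₗ[ℂ] CBsp M₂ N₂) : Prop :=
  ∀ (E : ℕ → CBsp M₁ N₁) (E' : CBsp M₁ N₁),
    CPUp M₁.toStarSubalgebra (fun n => (E n : M₁.toStarSubalgebra →ₗ[ℂ] (K₁ →L[ℂ] K₁)))
      (E' : M₁.toStarSubalgebra →ₗ[ℂ] (K₁ →L[ℂ] K₁)) →
    CPUp M₂.toStarSubalgebra (fun n => (Sm (E n) : M₂.toStarSubalgebra →ₗ[ℂ] (K₂ →L[ℂ] K₂)))
      (Sm E' : M₂.toStarSubalgebra →ₗ[ℂ] (K₂ →L[ℂ] K₂))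

/-- A quantum supermap: a linear, completely positive, normal map between spaces of
weak*-continuous completely bounded maps. -/
def IsSupermap (Sm : CBsp M₁ N₁ →ₗ[ℂ] CBsp M₂ N₂) : Prop :=
  SupCP Sm ∧ SupNormal Sm

/-- A deterministic quantum supermap: a quantum supermap mapping quantum channels to quantum
channels. -/
def IsDetSupermap (Sm : CBsp M₁ N₁ →ₗ[ℂ] CBsp M₂ N₂) : Prop :=
  IsSupermap Sm ∧
  ∀ E : CBsp M₁ N₁,
    IsChannel M₁.toStarSubalgebra N₁ (E : M₁.toStarSubalgebra →ₗ[ℂ] (K₁ →L[ℂ] K₁)) →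
    IsChannel M₂.toStarSubalgebra N₂ (Sm E : M₂.toStarSubalgebra →ₗ[ℂ] (K₂ →L[ℂ] K₂))

end Supermap

/-- The Loewner order on bounded operators. -/
def opLE {E : Type*} [NormedAddCommGroup E] [InnerProductSpace ℂ E] [CompleteSpace E]
    (a b : E →L[ℂ] E) : Prop := (b - a).IsPositive

/-- Least upper bounds for the Loewner order. -/
def opIsLUB {E : Type*} [NormedAddCommGroup E] [InnerProductSpace ℂ E] [CompleteSpace E]
    (s : Set (E →L[ℂ] E)) (a : E →L[ℂ] E) : Prop :=
  (∀ b ∈ s, opLE b a) ∧ ∀ c, (∀ b ∈ s, opLE b c) → opLE a c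

section Tensor

/-- A realization of the Hilbert space tensor product `H₁ ⊗ H₂` : a Hilbert space `G` together
with a bilinear map `t : H₁ × H₂ → G` with total range and satisfying the characteristic
inner product identity. -/
structure TensorStruct (H₁ H₂ G : Type*) [NormedAddCommGroup H₁] [InnerProductSpace ℂ H₁]
    [NormedAddCommGroup H₂] [InnerProductSpace ℂ H₂]
    [NormedAddCommGroup G] [InnerProductSpace ℂ G] : Type _ where
  t : H₁ →ₗ[ℂ] H₂ →ₗ[ℂ] G
  inner_t : ∀ x y v w, ⟪t x v, t y w⟫_ℂ = ⟪x, y⟫_ℂ * ⟪v, w⟫_ℂ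
  dense_t : Dense (↑(Submodule.span ℂ {g | ∃ x v, g = t x v}) : Set G)

variable {H₁ H₂ G : Type*}
  [NormedAddCommGroup H₁] [InnerProductSpace ℂ H₁] [CompleteSpace H₁]
  [NormedAddCommGroup H₂] [InnerProductSpace ℂ H₂] [CompleteSpace H₂]
  [NormedAddCommGroup G] [InnerProductSpace ℂ G] [CompleteSpace G]

/-- The set of elementary tensors `a ⊗ b`, `a ∈ M`, `b ∈ N`, inside `B(H₁ ⊗ H₂)`. -/
def elemT (τ : TensorStruct H₁ H₂ G) (M : VonNeumannAlgebra H₁) (N : VonNeumannAlgebra H₂) :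
    Set (G →L[ℂ] G) :=
  {c | ∃ a ∈ M, ∃ b ∈ N, ∀ x v, c (τ.t x v) = τ.t (a x) (b v)}

/-- The von Neumann algebra tensor product `M ⊗̄ N`, realized as the double commutant of the
set of elementary tensors. -/
def vnT (τ : TensorStruct H₁ H₂ G) (M : VonNeumannAlgebra H₁) (N : VonNeumannAlgebra H₂) :
    VonNeumannAlgebra G where
  toStarSubalgebra := StarSubalgebra.centralizer ℂ
    ((StarSubalgebra.centralizer ℂ (elemT τ M N) :
        StarSubalgebra ℂ (G →L[ℂ] G)) : Set (G →L[ℂ] G))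
  centralizer_centralizer' := by
    show Set.centralizer (Set.centralizer ((StarSubalgebra.centralizer ℂ
        ((StarSubalgebra.centralizer ℂ (elemT τ M N) :
          StarSubalgebra ℂ (G →L[ℂ] G)) : Set (G →L[ℂ] G))) : Set (G →L[ℂ] G)))
      = ((StarSubalgebra.centralizer ℂ
        ((StarSubalgebra.centralizer ℂ (elemT τ M N) :
          StarSubalgebra ℂ (G →L[ℂ] G)) : Set (G →L[ℂ] G))) : Set (G →L[ℂ] G))
    rw [StarSubalgebra.coe_centralizer_centralizer]
    exact Set.centralizer_centralizer_centralizer _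

end Tensor

section Amp

variable {H₁ K₁ H₂ K₂ V G G' : Type*}
  [NormedAddCommGroup H₁] [InnerProductSpace ℂ H₁] [CompleteSpace H₁]
  [NormedAddCommGroup K₁] [InnerProductSpace ℂ K₁] [CompleteSpace K₁]
  [NormedAddCommGroup H₂] [InnerProductSpace ℂ H₂] [CompleteSpace H₂]
  [NormedAddCommGroup K₂] [InnerProductSpace ℂ K₂] [CompleteSpace K₂]
  [NormedAddCommGroup V] [InnerProductSpace ℂ V] [CompleteSpace V]
  [NormedAddCommGroup G] [InnerProductSpace ℂ G] [CompleteSpace G]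
  [NormedAddCommGroup G'] [InnerProductSpace ℂ G'] [CompleteSpace G']

/-- `Ē` is the amplification `E ⊗ id_{B(V)} : M ⊗̄ B(V) → B(K₁ ⊗ V)` of the
weak*-continuous completely bounded map `E : M → B(K₁)` : it is weak*-continuous and acts in
the expected way on elementary tensors. -/
def IsAmp (M : VonNeumannAlgebra H₁) (τ : TensorStruct H₁ V G) (κ : TensorStruct K₁ V G')
    (E : M.toStarSubalgebra →ₗ[ℂ] (K₁ →L[ℂ] K₁))
    (Ebar : (vnT τ M (topVN V)).toStarSubalgebra →ₗ[ℂ] (G' →L[ℂ] G')) : Prop :=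
  WStarCont (vnT τ M (topVN V)).toStarSubalgebra Ebar ∧
  ∀ (c : (vnT τ M (topVN V)).toStarSubalgebra) (a : H₁ →L[ℂ] H₁) (ha : a ∈ M) (b : V →L[ℂ] V),
    (∀ x v, (c : G →L[ℂ] G) (τ.t x v) = τ.t (a x) (b v)) →
    ∀ x v, (Ebar c) (κ.t x v) = κ.t ((E ⟨a, ha⟩) x) (b v)

/-- The triple `(V, W, F)` (presented through concrete realizations `τ`, `κ` of the Hilbert
tensor products `H₁ ⊗ V` and `K₁ ⊗ V`) is a dilation of the supermap `Sm`, i.e.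
`[Sm(E)](A) = W* [(E ⊗ id_V)(F(A))] W` for all `E ∈ CB(M₁, B(K₁))` and `A ∈ M₂`. -/
def DilatesTo (M₁ : VonNeumannAlgebra H₁) (M₂ : VonNeumannAlgebra H₂)
    (τ : TensorStruct H₁ V G) (κ : TensorStruct K₁ V G') (W : K₂ →L[ℂ] G')
    (F : M₂.toStarSubalgebra →ₗ[ℂ] (G →L[ℂ] G)) (hF : ∀ X, F X ∈ vnT τ M₁ (topVN V))
    (Sm : CBsp M₁ (topVN K₁) →ₗ[ℂ] CBsp M₂ (topVN K₂)) : Prop :=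
  ∀ E : CBsp M₁ (topVN K₁),
    ∃ Ebar, IsAmp M₁ τ κ (E : M₁.toStarSubalgebra →ₗ[ℂ] (K₁ →L[ℂ] K₁)) Ebar ∧
      ∀ A, (Sm E : M₂.toStarSubalgebra →ₗ[ℂ] (K₂ →L[ℂ] K₂)) A
        = (ContinuousLinearMap.adjoint W) ∘L ((Ebar ⟨F A, hF A⟩) ∘L W)

/-- Minimality of a dilation: `V = span closure of {(u* ⊗ I_V) W v | u ∈ K₁, v ∈ K₂}`. -/
def MinimalDil (κ : TensorStruct K₁ V G') (W : K₂ →L[ℂ] G') : Prop :=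
  Dense (↑(Submodule.span ℂ {w : V | ∃ (u : K₁) (v : K₂) (ℓ : G' →L[ℂ] V),
    (∀ k z, ℓ (κ.t k z) = ⟪u, k⟫_ℂ • z) ∧ w = ℓ (W v)}) : Set V)

end Amp

/-- A bundled separable complex Hilbert space. -/
structure HilbertSpaceStruct : Type 1 where
  carrier : Type
  [grp : NormedAddCommGroup carrier]
  [ipc : InnerProductSpace ℂ carrier]
  [cpl : CompleteSpace carrier]
  [sep : TopologicalSpace.SeparableSpace carrier]

attribute [instance] HilbertSpaceStruct.grp HilbertSpaceStruct.ipc HilbertSpaceStruct.cpl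
  HilbertSpaceStruct.sep


/-- A unital *-homomorphism `π : B(H) → B(U)` is normal if it preserves least upper bounds of
bounded increasing nets of positive operators. -/
def NormalHom {H U : Type*} [NormedAddCommGroup H] [InnerProductSpace ℂ H] [CompleteSpace H]
    [NormedAddCommGroup U] [InnerProductSpace ℂ U] [CompleteSpace U]
    (π : (H →L[ℂ] H) →⋆ₐ[ℂ] (U →L[ℂ] U)) : Prop :=
  ∀ {ι : Type} [Preorder ι] [Nonempty ι] [IsDirected ι (· ≤ ·)],
  ∀ (T : ι → (H →L[ℂ] H)) (T' : H →L[ℂ] H),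
    (∀ i, (T i).IsPositive) → (∀ i j, i ≤ j → opLE (T i) (T j)) →
    (∃ Bd, ∀ i, opLE (T i) Bd) →
    opIsLUB (Set.range T) T' → opIsLUB (Set.range fun i => π (T i)) (π T')

/-!
Let `Pₙ` be the orthogonal projections onto the spans of the first `n` terms of a dense sequence
of `H`; they increase strongly to `1`, so `1` is their supremum. By normality `π(Pₙ)` is an
increasing sequence of projections with supremum `1`, and such a sequence converges strongly
to `1`. Hence `π(A)v = lim π(A Pₙ)v`, and since `A Pₙ` is a finite sum of rank-one operators
`|x⟩⟨y|`, every generator `π(A)v` lies in the closed span of `{π(|x⟩⟨y|)w : x, y ∈ H, w ∈ S}`.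
That set is a continuous image of `H × H × S`, hence separable.
-/

open scoped CStarAlgebra

section RCLike

variable {𝕜 E F G : Type*} [RCLike 𝕜] [NormedAddCommGroup E] [InnerProductSpace 𝕜 E]
  [NormedAddCommGroup F] [InnerProductSpace 𝕜 F] [NormedAddCommGroup G] [InnerProductSpace 𝕜 G]

theorem _root_.ContinuousLinearMap.isPositive_of_tendsto {ι : Type*} {l : Filter ι} [l.NeBot]
    {T : ι → E →L[𝕜] E} {T' : E →L[𝕜] E} (hT : ∀ x, Tendsto (fun i => T i x) l (𝓝 (T' x)))
    (hpos : ∀ᶠ i in l, (T i).IsPositive) : T'.IsPositive := by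
  refine ⟨fun x y => ?_, fun x => ?_⟩
  · refine tendsto_nhds_unique (((hT x).inner tendsto_const_nhds).congr' ?_)
      (tendsto_const_nhds.inner (hT y))
    exact hpos.mono fun i hi => hi.isSymmetric x y
  · exact ge_of_tendsto ((RCLike.continuous_re.tendsto _).comp ((hT x).inner tendsto_const_nhds))
      (hpos.mono fun i hi => hi.2 x)

theorem _root_.ContinuousLinearMap.isLUB_range_of_monotone_of_tendsto {ι : Type*}
    [SemilatticeSup ι] [Nonempty ι] {T : ι → E →L[𝕜] E} {T' : E →L[𝕜] E} (hmono : Monotone T)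
    (hT : ∀ x, Tendsto (fun i => T i x) atTop (𝓝 (T' x))) : IsLUB (Set.range T) T' := by
  constructor
  · rintro _ ⟨i, rfl⟩
    exact isPositive_of_tendsto (fun x => (hT x).sub tendsto_const_nhds)
      ((eventually_ge_atTop i).mono fun j hj => hmono hj)
  · intro c hc
    exact isPositive_of_tendsto (fun x => tendsto_const_nhds.sub (hT x))
      (Eventually.of_forall fun i => hc ⟨i, rfl⟩)

variable (𝕜 E) in
theorem _root_.Submodule.exists_monotone_finiteDimensional_topologicalClosure_iSup_eq_top
    [TopologicalSpace.SeparableSpace E] :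
    ∃ K : ℕ → Submodule 𝕜 E, Monotone K ∧ (∀ n, FiniteDimensional 𝕜 (K n)) ∧
      (⨆ n, K n).topologicalClosure = ⊤ := by
  obtain ⟨u, hu⟩ := TopologicalSpace.exists_dense_seq E
  refine ⟨fun n => Submodule.span 𝕜 (u '' Set.Iio n),
    fun m n h => Submodule.span_mono (Set.image_mono (Set.Iio_subset_Iio h)),
    fun n => FiniteDimensional.span_of_finite 𝕜 ((Set.finite_Iio n).image u), ?_⟩
  refine Submodule.dense_iff_topologicalClosure_eq_top.mp (hu.mono ?_)
  rintro _ ⟨k, rfl⟩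
  exact Submodule.mem_iSup_of_mem (k + 1) (Submodule.subset_span ⟨k, by simp, rfl⟩)

theorem _root_.InnerProductSpace.continuous_rankOne :
    Continuous fun p : E × F => InnerProductSpace.rankOne 𝕜 p.1 p.2 := by
  simp_rw [InnerProductSpace.rankOne_def]
  exact (smulRightL 𝕜 F E).continuous₂.comp
    (((innerSL 𝕜).continuous.comp continuous_snd).prodMk continuous_fst)

theorem _root_.ContinuousLinearMap.mul_starProjection_mem_span_rankOne (A : E →L[𝕜] E)
    (K : Submodule 𝕜 E) [FiniteDimensional 𝕜 K] :
    A * K.starProjection ∈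
      Submodule.span 𝕜 (Set.range fun p : E × E => InnerProductSpace.rankOne 𝕜 p.1 p.2) := by
  set b := stdOrthonormalBasis 𝕜 K
  rw [b.starProjection_eq_sum_rankOne, Finset.mul_sum]
  refine Submodule.sum_mem _ fun i _ => Submodule.subset_span ⟨(A (b i), b i), ?_⟩
  rw [mul_def]
  exact (InnerProductSpace.comp_rankOne _ _ A).symm

def rankOneImage (φ : (E →L[𝕜] E) →L[𝕜] F →L[𝕜] G) (S : Set F) : Set G :=
  (fun p : E × E × F => φ (InnerProductSpace.rankOne 𝕜 p.1 p.2.1) p.2.2) ''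
    (Set.univ ×ˢ Set.univ ×ˢ S)

theorem isSeparable_rankOneImage [TopologicalSpace.SeparableSpace E]
    (φ : (E →L[𝕜] E) →L[𝕜] F →L[𝕜] G) {S : Set F} (hS : TopologicalSpace.IsSeparable S) :
    TopologicalSpace.IsSeparable (rankOneImage φ S) := by
  refine ((TopologicalSpace.IsSeparable.of_separableSpace Set.univ).prod
    ((TopologicalSpace.IsSeparable.of_separableSpace Set.univ).prod hS)).image ?_
  exact (φ.continuous.comp (InnerProductSpace.continuous_rankOne.comp
    (continuous_fst.prodMk continuous_snd.fst))).clm_apply continuous_snd.snd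

theorem apply_mul_starProjection_mem_span_rankOneImage (φ : (E →L[𝕜] E) →L[𝕜] F →L[𝕜] G)
    {S : Set F} (A : E →L[𝕜] E) (K : Submodule 𝕜 E) [FiniteDimensional 𝕜 K] {v : F}
    (hv : v ∈ S) : φ (A * K.starProjection) v ∈ Submodule.span 𝕜 (rankOneImage φ S) := by
  refine Submodule.span_mono ?_ (Submodule.apply_mem_span_image_of_mem_span
    ((apply 𝕜 G v).toLinearMap ∘ₗ φ.toLinearMap) (mul_starProjection_mem_span_rankOne A K))
  rintro _ ⟨_, ⟨⟨x, y⟩, rfl⟩, rfl⟩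
  exact ⟨(x, y, v), ⟨trivial, trivial, hv⟩, rfl⟩

end RCLike

section Complex

variable {E : Type*} [NormedAddCommGroup E] [InnerProductSpace ℂ E] [CompleteSpace E]

theorem _root_.IsStarProjection.tendsto_apply_of_isLUB_one {ι : Type*} [Preorder ι]
    {Q : ι → E →L[ℂ] E} (hQ : ∀ i, IsStarProjection (Q i)) (hmono : Monotone Q)
    (hlub : IsLUB (Set.range Q) 1) (x : E) : Tendsto (fun i => Q i x) atTop (𝓝 x) := by
  choose _ hQK using fun i => isStarProjection_iff_eq_starProjection_range.mp (hQ i)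
  set K := fun i => (Q i).range
  have hK : Monotone K := fun i j hij =>
    Submodule.starProjection_le_starProjection_iff.mp (by rw [← hQK i, ← hQK j]; exact hmono hij)
  -- the projection onto the closed span of all ranges is an upper bound, hence equals `1`
  set W := (⨆ i, K i).topologicalClosure
  have hW : W.starProjection = 1 := by
    refine le_antisymm isStarProjection_starProjection.le_one (hlub.2 ?_)
    rintro _ ⟨i, rfl⟩
    rw [hQK i]
    exact Submodule.starProjection_le_starProjection_iff.mpr
      ((le_iSup K i).trans (Submodule.le_topologicalClosure _))
  have hWtop : W = ⊤ :=
    Submodule.starProjection_inj.mp (hW.trans Submodule.starProjection_top'.symm)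
  exact (Submodule.starProjection_tendsto_self K hK x hWtop.ge).congr fun i =>
    DFunLike.congr_fun (hQK i).symm x

theorem NormalHom.tendsto_apply_starProjection {U : Type*} [NormedAddCommGroup U]
    [InnerProductSpace ℂ U] [CompleteSpace U] {π : (E →L[ℂ] E) →⋆ₐ[ℂ] (U →L[ℂ] U)}
    (hπ : NormalHom π) {K : ℕ → Submodule ℂ E} [∀ n, (K n).HasOrthogonalProjection]
    (hK : Monotone K) (hKtop : (⨆ n, K n).topologicalClosure = ⊤) (v : U) :
    Tendsto (fun n => π (K n).starProjection v) atTop (𝓝 v) := by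
  set P := fun n => (K n).starProjection
  have hPmono : Monotone P := fun m n h => Submodule.starProjection_le_starProjection_iff.mpr (hK h)
  have hPlub : IsLUB (Set.range P) 1 := isLUB_range_of_monotone_of_tendsto hPmono fun x => by
    simpa using Submodule.starProjection_tendsto_self K hK x hKtop.ge
  have hπPlub : IsLUB (Set.range fun n => π (P n)) 1 := by
    rw [← map_one π]
    exact hπ P 1 (fun n => .of_isStarProjection isStarProjection_starProjection)
      (fun m n h => hPmono h)
      ⟨1, fun n => (isStarProjection_starProjection : IsStarProjection (P n)).le_one⟩ hPlub
  exact IsStarProjection.tendsto_apply_of_isLUB_one (fun n => isStarProjection_starProjection.map π)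
    (fun m n h => OrderHomClass.mono π (hPmono h)) hπPlub v

end Complex

/-- Let `H` be a separable Hilbert space and `π : B(H) → B(Û)` a normal
unital *-homomorphism. If there is a separable subset `S ⊂ Û` such that the span of
`{π(A)v : A ∈ B(H), v ∈ S}` is dense in `Û`, then `Û` is separable. -/
theorem statement12 {H U : Type*} [NormedAddCommGroup H] [InnerProductSpace ℂ H] [CompleteSpace H]
    [TopologicalSpace.SeparableSpace H] [NormedAddCommGroup U] [InnerProductSpace ℂ U] [CompleteSpace U]
    (π : (H →L[ℂ] H) →⋆ₐ[ℂ] (U →L[ℂ] U)) (hπ : NormalHom π)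
    (Sset : Set U) (hsep : TopologicalSpace.IsSeparable Sset)
    (hdense : Dense (↑(Submodule.span ℂ
      {u : U | ∃ (Aop : H →L[ℂ] H), ∃ v ∈ Sset, u = π Aop v}) : Set U)) :
    TopologicalSpace.SeparableSpace U := by
  obtain ⟨K, hKmono, hKfin, hKtop⟩ :=
    Submodule.exists_monotone_finiteDimensional_topologicalClosure_iSup_eq_top ℂ H
  set φ : (H →L[ℂ] H) →L[ℂ] U →L[ℂ] U := ⟨π.toAlgHom.toLinearMap, map_continuous π⟩
  have hgen : {u : U | ∃ (Aop : H →L[ℂ] H), ∃ v ∈ Sset, u = π Aop v} ⊆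
      (Submodule.span ℂ (rankOneImage φ Sset)).topologicalClosure := by
    rintro _ ⟨A, v, hv, rfl⟩
    have hlim : Tendsto (fun n => π (A * (K n).starProjection) v) atTop (𝓝 (π A v)) := by
      simp_rw [map_mul]
      exact ((π A).continuous.tendsto v).comp (hπ.tendsto_apply_starProjection hKmono hKtop v)
    exact (Submodule.isClosed_topologicalClosure _).mem_of_tendsto hlim
      (Eventually.of_forall fun n => Submodule.le_topologicalClosure _
        (apply_mul_starProjection_mem_span_rankOneImage φ A (K n) hv))
  rw [← TopologicalSpace.isSeparable_univ_iff,
    ← (hdense.mono (Submodule.span_le.mpr hgen)).closure_eq, Submodule.topologicalClosure_coe,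
    closure_closure]
  exact (isSeparable_rankOneImage φ hsep).span.closure

end QSM
end
end

section
/- Let S be a (not necessarily deterministic) quantum supermap from CB(M₁,B(K₁)) to CB(M₂,B(K₂)), with M₁ ⊂ B(H₁). Define on the algebraic tensor product B(K₁,H₁) ⊗ M₂ ⊗ K₂ the sesquilinear form ⟨E₁⊗A₁⊗v₁, E₂⊗A₂⊗v₂⟩_S := ⟨v₁, [S(E₁*⊙E₂)](A₁*A₂) v₂⟩, where (E₁*⊙E₂)(X) = E₁*XE₂ on M₁. Then this form is positive semidefinite. Moreover, if T is another quantum supermap with S − T completely positive and normal, then 0 ≤ ⟨φ,φ⟩_T ≤ ⟨φ,φ⟩_S for all φ in the algebraic tensor product. -/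
open scoped ComplexOrder InnerProductSpace
open Filter Topology ContinuousLinearMap

set_option synthInstance.maxHeartbeats 1000000
set_option maxHeartbeats 1000000

noncomputable section

namespace QSM

variable {H K : Type*}
  [NormedAddCommGroup H] [InnerProductSpace ℂ H] [CompleteSpace H]
  [NormedAddCommGroup K] [InnerProductSpace ℂ K] [CompleteSpace K]

variable (S : StarSubalgebra ℂ (H →L[ℂ] H))

/-!
The map `[Bᵢⱼ] ↦ [Eₖ* Bₖₗ Eₗ]` on `Mₙ(M₁)` is compression by `diag(Eₖ)`, hence completely
positive. Complete positivity of `S`, applied to this diagonal amplification, sends the positive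
Gram matrix `[Aₖ* Aₗ]` to the positive matrix `[S(Eₖ* ⊙ Eₗ)(Aₖ* Aₗ)]`, whose quadratic form at
`(vₖ)` is `⟨φ, φ⟩_S`. The form is additive in the supermap, so `⟨φ, φ⟩_S = ⟨φ, φ⟩_T + ⟨φ, φ⟩_{S-T}`
with both summands nonnegative.
-/

lemma isPositive_iff_forall_inner_nonneg {E : Type*} [NormedAddCommGroup E]
    [InnerProductSpace ℂ E] (T : E →L[ℂ] E) :
    T.IsPositive ↔ ∀ x, 0 ≤ ⟪x, T x⟫_ℂ := by
  refine ⟨fun hT => hT.inner_nonneg_right, fun h => (isPositive_iff_complex T).2 fun x => ?_⟩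
  obtain ⟨hre, him⟩ := Complex.nonneg_iff.1 (h x)
  have hreal : ((⟪x, T x⟫_ℂ).re : ℂ) = ⟪x, T x⟫_ℂ := Complex.ext rfl (by simp [him])
  rw [← inner_conj_symm, ← hreal]
  simp [hre]

section MatOp

variable {ι : Type*} [Fintype ι] [DecidableEq ι]
  {E F : Type*} [NormedAddCommGroup E] [InnerProductSpace ℂ E]
  [NormedAddCommGroup F] [InnerProductSpace ℂ F]

lemma matOp_apply (T : ι → ι → (E →L[ℂ] F)) (x : PiLp 2 fun _ : ι => E) (i : ι) :
    matOp T x i = ∑ j, T i j (x j) := by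
  simp [matOp, projCLM, inclCLM, apply_ite DFunLike.coe, ite_apply]

lemma inner_matOp (T : ι → ι → (E →L[ℂ] F)) (w : PiLp 2 fun _ : ι => F)
    (x : PiLp 2 fun _ : ι => E) :
    ⟪w, matOp T x⟫_ℂ = ∑ i, ∑ j, ⟪w i, T i j (x j)⟫_ℂ := by
  simp only [PiLp.inner_apply, matOp_apply, inner_sum]

lemma isPositive_matOp_iff (T : ι → ι → (E →L[ℂ] E)) :
    (matOp T).IsPositive ↔ ∀ w : ι → E, 0 ≤ ∑ i, ∑ j, ⟪w i, T i j (w j)⟫_ℂ := by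
  simp only [isPositive_iff_forall_inner_nonneg, inner_matOp]
  exact ⟨fun h w => h (WithLp.toLp 2 w), fun h w => h w⟩

lemma isPositive_matOp_conj [CompleteSpace E] [CompleteSpace F] {T : ι → ι → (F →L[ℂ] F)}
    (hT : (matOp T).IsPositive) (D : ι → (E →L[ℂ] F)) :
    (matOp fun k l => adjoint (D k) ∘L T k l ∘L D l).IsPositive := by
  rw [isPositive_matOp_iff] at hT ⊢
  intro w
  simpa only [comp_apply, adjoint_inner_right] using hT fun i => D i (w i)

lemma isPositive_matOp_adjoint_comp [CompleteSpace E] [CompleteSpace F] (A : ι → (E →L[ℂ] F)) :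
    (matOp fun k l => adjoint (A k) ∘L A l).IsPositive := by
  rw [isPositive_matOp_iff]
  intro w
  have hgram : ∑ k, ∑ l, ⟪w k, (adjoint (A k) ∘L A l) (w l)⟫_ℂ
      = ⟪∑ k, A k (w k), ∑ l, A l (w l)⟫_ℂ := by
    rw [sum_inner]
    simp only [inner_sum, comp_apply, adjoint_inner_right]
  rw [hgram, inner_self_eq_norm_sq_to_K]
  norm_cast
  exact Complex.zero_le_real.2 (sq_nonneg _)

end MatOp

lemma sum_sum_ite_and_eq {ι M N : Type*} [Fintype ι] [DecidableEq ι] [Zero M]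
    [AddCommMonoid N] (f : ι → ι → M → N) (hf : ∀ i j, f i j 0 = 0) (x : M) (k l : ι) :
    ∑ i, ∑ j, f i j (if i = k ∧ j = l then x else 0) = f k l x := by
  simp [ite_and, apply_ite, hf]

section SupermapForm

variable {H₁ K₁ H₂ K₂ : Type*}
  [NormedAddCommGroup H₁] [InnerProductSpace ℂ H₁] [CompleteSpace H₁]
  [NormedAddCommGroup K₁] [InnerProductSpace ℂ K₁] [CompleteSpace K₁]
  [NormedAddCommGroup H₂] [InnerProductSpace ℂ H₂] [CompleteSpace H₂]
  [NormedAddCommGroup K₂] [InnerProductSpace ℂ K₂] [CompleteSpace K₂]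
  {M₁ : VonNeumannAlgebra H₁} {N₁ : VonNeumannAlgebra K₁}
  {M₂ : VonNeumannAlgebra H₂} {N₂ : VonNeumannAlgebra K₂}

/-- `⟨φ, φ⟩_S` for `φ = ∑ᵢ Eᵢ ⊗ Aᵢ ⊗ vᵢ`, where `X i j` stands for `Eᵢ* ⊙ Eⱼ`. -/
def supermapForm {ι : Type*} [Fintype ι] (Sm : CBsp M₁ N₁ →ₗ[ℂ] CBsp M₂ N₂)
    (X : ι → ι → CBsp M₁ N₁) (A : ι → M₂.toStarSubalgebra) (v : ι → K₂) : ℂ :=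
  ∑ i, ∑ j, ⟪v i, ((Sm (X i j) : M₂.toStarSubalgebra →ₗ[ℂ] (K₂ →L[ℂ] K₂))
    (star (A i) * A j)) (v j)⟫_ℂ

lemma supermapForm_add {ι : Type*} [Fintype ι] {Sm Tm Dm : CBsp M₁ N₁ →ₗ[ℂ] CBsp M₂ N₂}
    (hsum : ∀ X', Sm X' = Tm X' + Dm X') (X : ι → ι → CBsp M₁ N₁)
    (A : ι → M₂.toStarSubalgebra) (v : ι → K₂) :
    supermapForm Sm X A v = supermapForm Tm X A v + supermapForm Dm X A v := by
  simp only [supermapForm, hsum, Submodule.coe_add, LinearMap.add_apply, add_apply,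
    inner_add_right, Finset.sum_add_distrib]

lemma SupCP.supermapForm_nonneg {Sm : CBsp M₁ N₁ →ₗ[ℂ] CBsp M₂ N₂} (hS : SupCP Sm) {n : ℕ}
    (Ee : Fin n → (K₁ →L[ℂ] H₁)) (X : Fin n → Fin n → CBsp M₁ N₁)
    (hX : ∀ i j, (X i j : M₁.toStarSubalgebra →ₗ[ℂ] (K₁ →L[ℂ] K₁))
      = sandwichMap M₁.toStarSubalgebra (adjoint (Ee i)) (Ee j))
    (A : Fin n → M₂.toStarSubalgebra) (v : Fin n → K₂) :
    0 ≤ supermapForm Sm X A v := by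
  let t : Fin n → Fin n → Fin n → Fin n → CBsp M₁ N₁ :=
    fun k l i j => if i = k ∧ j = l then X k l else 0
  have hin : ∀ B : Matrix (Fin n) (Fin n) M₁.toStarSubalgebra,
      (matOp fun i j => (B i j : H₁ →L[ℂ] H₁)).IsPositive →
      (matOp fun k l => ∑ i, ∑ j,
        ((t k l i j : M₁.toStarSubalgebra →ₗ[ℂ] (K₁ →L[ℂ] K₁)) (B i j))).IsPositive := by
    intro B hB
    have hentries : (fun k l => ∑ i, ∑ j,
        ((t k l i j : M₁.toStarSubalgebra →ₗ[ℂ] (K₁ →L[ℂ] K₁)) (B i j)))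
        = fun k l => adjoint (Ee k) ∘L (B k l : H₁ →L[ℂ] H₁) ∘L Ee l := by
      funext k l
      rw [sum_sum_ite_and_eq (fun i j (Φ : CBsp M₁ N₁) =>
        (Φ : M₁.toStarSubalgebra →ₗ[ℂ] (K₁ →L[ℂ] K₁)) (B i j)) (by simp), hX]
      rfl
    rw [hentries]
    exact isPositive_matOp_conj hB Ee
  have hgram : (matOp fun i j =>
      ((star (A i) * A j : M₂.toStarSubalgebra) : H₂ →L[ℂ] H₂)).IsPositive :=
    isPositive_matOp_adjoint_comp fun i => (A i : H₂ →L[ℂ] H₂)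
  have hout := hS n t hin _ hgram
  have hentries : (fun k l => ∑ i, ∑ j,
      ((Sm (t k l i j) : M₂.toStarSubalgebra →ₗ[ℂ] (K₂ →L[ℂ] K₂)) (star (A i) * A j)))
      = fun k l => (Sm (X k l) : M₂.toStarSubalgebra →ₗ[ℂ] (K₂ →L[ℂ] K₂)) (star (A k) * A l) :=
    funext₂ fun k l => sum_sum_ite_and_eq (fun i j (Φ : CBsp M₁ N₁) =>
      (Sm Φ : M₂.toStarSubalgebra →ₗ[ℂ] (K₂ →L[ℂ] K₂)) (star (A i) * A j)) (by simp) _ k l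
  rw [hentries, isPositive_matOp_iff] at hout
  exact hout v

end SupermapForm

theorem statement14_general {H₁ K₁ H₂ K₂ : Type*} [NormedAddCommGroup H₁] [InnerProductSpace ℂ H₁] [CompleteSpace H₁]
    [NormedAddCommGroup K₁] [InnerProductSpace ℂ K₁] [CompleteSpace K₁]
    [NormedAddCommGroup H₂] [InnerProductSpace ℂ H₂] [CompleteSpace H₂]
    [NormedAddCommGroup K₂] [InnerProductSpace ℂ K₂] [CompleteSpace K₂]
    (M₁ : VonNeumannAlgebra H₁) (M₂ : VonNeumannAlgebra H₂)
    (Sm : CBsp M₁ (topVN K₁) →ₗ[ℂ] CBsp M₂ (topVN K₂)) (hS : IsSupermap Sm)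
    (n : ℕ) (Ee : Fin n → (K₁ →L[ℂ] H₁)) (X : Fin n → Fin n → CBsp M₁ (topVN K₁))
    (hX : ∀ i j, (X i j : M₁.toStarSubalgebra →ₗ[ℂ] (K₁ →L[ℂ] K₁))
      = sandwichMap M₁.toStarSubalgebra (ContinuousLinearMap.adjoint (Ee i)) (Ee j))
    (A : Fin n → M₂.toStarSubalgebra) (v : Fin n → K₂) :
    (0 ≤ ∑ i, ∑ j, ⟪v i, ((Sm (X i j) : M₂.toStarSubalgebra →ₗ[ℂ] (K₂ →L[ℂ] K₂))
        (star (A i) * A j)) (v j)⟫_ℂ) ∧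
    ∀ Tm Dm : CBsp M₁ (topVN K₁) →ₗ[ℂ] CBsp M₂ (topVN K₂),
      IsSupermap Tm → (∀ X' : CBsp M₁ (topVN K₁), Sm X' = Tm X' + Dm X') → IsSupermap Dm →
      (0 ≤ ∑ i, ∑ j, ⟪v i, ((Tm (X i j) : M₂.toStarSubalgebra →ₗ[ℂ] (K₂ →L[ℂ] K₂))
          (star (A i) * A j)) (v j)⟫_ℂ) ∧
      (∑ i, ∑ j, ⟪v i, ((Tm (X i j) : M₂.toStarSubalgebra →ₗ[ℂ] (K₂ →L[ℂ] K₂))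
          (star (A i) * A j)) (v j)⟫_ℂ)
        ≤ ∑ i, ∑ j, ⟪v i, ((Sm (X i j) : M₂.toStarSubalgebra →ₗ[ℂ] (K₂ →L[ℂ] K₂))
          (star (A i) * A j)) (v j)⟫_ℂ := by
  refine ⟨hS.1.supermapForm_nonneg Ee X hX A v, fun Tm Dm hT hsum hD => ?_⟩
  refine ⟨hT.1.supermapForm_nonneg Ee X hX A v, ?_⟩
  change supermapForm Tm X A v ≤ supermapForm Sm X A v
  rw [supermapForm_add hsum]
  exact le_add_of_nonneg_right (hD.1.supermapForm_nonneg Ee X hX A v)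

/-- The sesquilinear form `⟨·,·⟩_S` associated to a quantum supermap `S` is
positive semidefinite; moreover if `T` is a quantum supermap with `S − T` a quantum supermap,
then `0 ≤ ⟨φ,φ⟩_T ≤ ⟨φ,φ⟩_S` for all `φ` in the algebraic tensor product
`B(K₁,H₁) ⊗ M₂ ⊗ K₂`. -/
theorem statement14 {H₁ K₁ H₂ K₂ : Type*} [NormedAddCommGroup H₁] [InnerProductSpace ℂ H₁] [CompleteSpace H₁]
    [TopologicalSpace.SeparableSpace H₁] [NormedAddCommGroup K₁] [InnerProductSpace ℂ K₁] [CompleteSpace K₁]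
    [TopologicalSpace.SeparableSpace K₁] [NormedAddCommGroup H₂] [InnerProductSpace ℂ H₂] [CompleteSpace H₂]
    [TopologicalSpace.SeparableSpace H₂] [NormedAddCommGroup K₂] [InnerProductSpace ℂ K₂] [CompleteSpace K₂]
    [TopologicalSpace.SeparableSpace K₂]
    (M₁ : VonNeumannAlgebra H₁) (M₂ : VonNeumannAlgebra H₂)
    (Sm : CBsp M₁ (topVN K₁) →ₗ[ℂ] CBsp M₂ (topVN K₂)) (hS : IsSupermap Sm)
    (n : ℕ) (Ee : Fin n → (K₁ →L[ℂ] H₁)) (X : Fin n → Fin n → CBsp M₁ (topVN K₁))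
    (hX : ∀ i j, (X i j : M₁.toStarSubalgebra →ₗ[ℂ] (K₁ →L[ℂ] K₁))
      = sandwichMap M₁.toStarSubalgebra (ContinuousLinearMap.adjoint (Ee i)) (Ee j))
    (A : Fin n → M₂.toStarSubalgebra) (v : Fin n → K₂) :
    (0 ≤ ∑ i, ∑ j, ⟪v i, ((Sm (X i j) : M₂.toStarSubalgebra →ₗ[ℂ] (K₂ →L[ℂ] K₂))
        (star (A i) * A j)) (v j)⟫_ℂ) ∧
    ∀ Tm Dm : CBsp M₁ (topVN K₁) →ₗ[ℂ] CBsp M₂ (topVN K₂),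
      IsSupermap Tm → (∀ X' : CBsp M₁ (topVN K₁), Sm X' = Tm X' + Dm X') → IsSupermap Dm →
      (0 ≤ ∑ i, ∑ j, ⟪v i, ((Tm (X i j) : M₂.toStarSubalgebra →ₗ[ℂ] (K₂ →L[ℂ] K₂))
          (star (A i) * A j)) (v j)⟫_ℂ) ∧
      (∑ i, ∑ j, ⟪v i, ((Tm (X i j) : M₂.toStarSubalgebra →ₗ[ℂ] (K₂ →L[ℂ] K₂))
          (star (A i) * A j)) (v j)⟫_ℂ)
        ≤ ∑ i, ∑ j, ⟪v i, ((Sm (X i j) : M₂.toStarSubalgebra →ₗ[ℂ] (K₂ →L[ℂ] K₂))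
          (star (A i) * A j)) (v j)⟫_ℂ :=
  statement14_general M₁ M₂ Sm hS n Ee X hX A v

end QSM
end
end
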